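/- Let S be a Buchsbaum simplicial poset of dimension n-1 that is a homology manifold, meaning additionally f~_k(S) = f_k(S) for all k (each link has top reduced homology of rank 1). Then f_S(t) = (1 - (-1)^n - chi(S)) + (-1)^n f_S(-t-1), and consequently the h-vector satisfies h_i = h_{n-i} + (-1)^i binomial(n,i) (1 - (-1)^n - chi(S)). -/

import Mathlib

/-!
Write `f(t) = ∑_I t^{rank I}`. Since every lower interval `[⊥, I]` is Boolean,
`(-t-1)^{rank I} = (-1)^{rank I} ∑_{J ≤ I} t^{rank J}`, so `f(-t-1) = ∑_J w_J t^{rank J}`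
with `w_J = ∑_{I ≥ J} (-1)^{rank I}`. We have `w_⊥ = 1 - χ`, and for `J ≠ ⊥` the weight `w_J`
is, up to the sign `-(-1)^{rank J}`, the reduced Euler characteristic of the link of `J`; the
Buchsbaum property concentrates its homology in the top degree, so the manifold condition
turns `∑_{rank J = k} w_J` into `(-1)^n f_{k-1}`. As `t ↦ -t-1` is an involution this is the
functional equation. For the `h`-vector, `h(a) = (1-a)^n f(a/(1-a))` for `a ≠ 1`, and the
functional equation at `t = a/(1-a)` reads `h(a) = c (1-a)^n + a^n h(1/a)`; comparing
coefficients gives `h_i = h_{n-i} + (-1)^i C(n,i) c`.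
-/

open Polynomial Finset

theorem StrictMono.add_card_le_apply_union {β : Type*} [DecidableEq β] {φ : Finset β → ℕ}
    (hφ : StrictMono φ) (s : Finset β) {u : Finset β} (hsu : Disjoint s u) :
    φ s + #u ≤ φ (s ∪ u) := by
  induction u using Finset.induction_on with
  | empty => simp
  | insert a u ha ih =>
    rw [disjoint_insert_right] at hsu
    have hlt : φ (s ∪ u) < φ (s ∪ insert a u) := by
      rw [union_insert]
      exact hφ (ssubset_insert (by simp [ha, hsu.1]))
    rw [card_insert_of_notMem ha]
    have := ih hsu.2
    omega

theorem StrictMono.apply_eq_card {β : Type*} [Fintype β] [DecidableEq β] {φ : Finset β → ℕ}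
    (hφ : StrictMono φ) (huniv : φ univ = Fintype.card β) (s : Finset β) : φ s = #s := by
  have hlow := hφ.add_card_le_apply_union ∅ (disjoint_empty_left s)
  have hup := hφ.add_card_le_apply_union s (disjoint_sdiff (t := univ))
  rw [empty_union] at hlow
  rw [union_sdiff_of_subset (subset_univ s), huniv, card_univ_sdiff] at hup
  have := card_le_univ s
  omega

theorem coeff_sum_C_mul_X_pow_rank {β R : Type*} [Fintype β] [Semiring R] (rank : β → ℕ)
    (g : β → R) (k : ℕ) :
    (∑ I : β, C (g I) * X ^ rank I).coeff k
      = ∑ I ∈ univ.filter (rank · = k), g I := by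
  simp [sum_filter, eq_comm]

theorem coeff_sum_X_pow_rank {β R : Type*} [Fintype β] [Semiring R] (rank : β → ℕ)
    (k : ℕ) :
    (∑ I : β, (X : R[X]) ^ rank I).coeff k = #(univ.filter (rank · = k)) := by
  simpa using coeff_sum_C_mul_X_pow_rank rank (fun _ => (1 : R)) k

theorem sum_neg_one_pow_rank {β : Type*} [Fintype β] {rank : β → ℕ} {n : ℕ}
    (hdim : ∀ I, rank I ≤ n) :
    ∑ I : β, (-1 : ℚ) ^ rank I = #(univ.filter (rank · = 0))
      - ∑ i ∈ range n, (-1 : ℚ) ^ i * #(univ.filter (rank · = i + 1)) := by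
  have hfiber (i : ℕ) : ∑ I ∈ univ.filter (rank · = i), (-1 : ℚ) ^ rank I
      = (-1) ^ i * #(univ.filter (rank · = i)) := by
    rw [sum_congr rfl fun I hI => by rw [(mem_filter.mp hI).2], sum_const, nsmul_eq_mul,
      mul_comm]
  rw [← sum_fiberwise_of_maps_to (g := rank) (t := range (n + 1)) (by simp [hdim]),
    sum_range_succ']
  simp only [hfiber, pow_succ, mul_neg_one, neg_mul, sum_neg_distrib, pow_zero, one_mul]
  ring

theorem alternating_sum_eq_of_support_subsingleton (β : ℤ → ℕ) {n : ℕ} {d : ℤ}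
    (hd : -1 ≤ d) (hdn : d ≤ n) (hβ : ∀ i ≠ d, β i = 0) :
    -(β (-1) : ℚ) + ∑ i ∈ range (n + 1), (-1 : ℚ) ^ i * β i = (-1) ^ d * β d := by
  obtain rfl | hd := hd.eq_or_lt
  · rw [sum_eq_zero fun i _ => by rw [hβ i (by omega)]; simp]
    simp
  · lift d to ℕ using by omega
    rw [hβ (-1) (by omega), sum_eq_single_of_mem d (by simp; omega) fun i _ hi => by
      rw [hβ i (by omega)]; simp]
    simp

theorem comp_neg_X_sub_one_comp_neg_X_sub_one {R : Type*} [CommRing R] (p : R[X]) :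
    (p.comp (-X - 1)).comp (-X - 1) = p := by
  rw [comp_assoc]
  simp

section SimplicialPoset

variable {α : Type*} [PartialOrder α] {rank : α → ℕ}

theorem rank_eq_card_of_orderIso (hrank : StrictMono rank) {I : α}
    (e : {J // J ≤ I} ≃o Finset (Fin (rank I))) (J : {J // J ≤ I}) : rank J = #(e J) := by
  have hφ : StrictMono fun s => rank (e.symm s) :=
    hrank.comp ((Subtype.strictMono_coe _).comp e.symm.strictMono)
  have htop : e.symm univ = ⟨I, le_rfl⟩ :=
    le_antisymm (e.symm univ).2 (e.le_symm_apply.mpr (subset_univ _))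
  simpa using hφ.apply_eq_card (by simp [htop]) (e J)

theorem sum_X_pow_rank_le [Fintype α] [DecidableLE α] {R : Type*} [CommSemiring R]
    (hrank : StrictMono rank) {I : α} (e : {J // J ≤ I} ≃o Finset (Fin (rank I))) :
    ∑ J ∈ univ.filter (· ≤ I), (X : R[X]) ^ rank J = (X + 1) ^ rank I := by
  rw [sum_subtype _ (p := (· ≤ I)) (fun _ => by simp), ← Fin.sum_pow_mul_eq_add_pow]
  exact Fintype.sum_equiv e.toEquiv _ _ fun J => by simp [rank_eq_card_of_orderIso hrank e J]

theorem sum_X_pow_rank_comp_neg_X_sub_one [Fintype α] [DecidableLE α] {R : Type*} [CommRing R]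
    (hrank : StrictMono rank)
    (hbool : ∀ I : α, Nonempty ({J // J ≤ I} ≃o Finset (Fin (rank I)))) :
    (∑ I : α, (X : R[X]) ^ rank I).comp (-X - 1)
      = ∑ J : α, C (∑ I ∈ univ.filter (J ≤ ·), (-1 : R) ^ rank I) * X ^ rank J := by
  have hterm (I : α) : ((X : R[X]) ^ rank I).comp (-X - 1)
      = ∑ J ∈ univ.filter (· ≤ I), C ((-1 : R) ^ rank I) * X ^ rank J := by
    rw [← mul_sum, sum_X_pow_rank_le hrank (hbool I).some, X_pow_comp, C_pow, ← mul_pow]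
    congr 1
    simp only [map_neg, map_one]
    ring
  simp_rw [Polynomial.sum_comp, hterm, map_sum, sum_mul]
  exact sum_comm' fun I J => by simp

theorem filter_rank_eq_zero [Fintype α] (hrank : StrictMono rank) {bot : α}
    (hbot : ∀ I, bot ≤ I) (hrankbot : rank bot = 0) : univ.filter (rank · = 0) = {bot} := by
  ext I
  simp only [mem_filter, mem_univ, true_and, mem_singleton]
  refine ⟨fun hI => ?_, fun hI => hI ▸ hrankbot⟩
  by_contra hne
  have := hrank (lt_of_le_of_ne (hbot I) (Ne.symm hne))
  omega

/-- `β` plays the reduced Betti numbers of the link of `J`, and `hEuler` the Euler–Poincaré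
formula for it. -/
theorem sum_neg_one_pow_rank_ge [Fintype α] [DecidableLE α]
    [DecidableRel ((· < ·) : α → α → Prop)]
    (hrank : StrictMono rank) {n : ℕ} {J : α} (hJ : rank J ≤ n) (β : ℤ → ℕ)
    (hβ : ∀ i : ℤ, i ≠ (n : ℤ) - rank J - 1 → β i = 0)
    (hEuler : (∑ I ∈ univ.filter (J < ·), (-1 : ℚ) ^ (rank I - rank J - 1)) - 1
      = -(β (-1) : ℚ) + ∑ i ∈ range (n + 1), (-1 : ℚ) ^ i * β i) :
    ∑ I ∈ univ.filter (J ≤ ·), (-1 : ℚ) ^ rank I = (-1) ^ n * β (n - rank J - 1) := by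
  classical
  set d : ℤ := n - rank J - 1
  rw [alternating_sum_eq_of_support_subsingleton β (by omega) (by omega) hβ] at hEuler
  have hsplit : univ.filter (J ≤ ·) = insert J (univ.filter (J < ·)) := by
    ext I
    simp [le_iff_eq_or_lt, eq_comm]
  have hshift : ∑ I ∈ univ.filter (J < ·), (-1 : ℚ) ^ rank I
      = -(-1) ^ rank J * ∑ I ∈ univ.filter (J < ·), (-1 : ℚ) ^ (rank I - rank J - 1) := by
    rw [mul_sum]
    refine sum_congr rfl fun I hI => ?_
    have hlt := hrank (mem_filter.mp hI).2
    rw [← neg_one_mul ((-1 : ℚ) ^ rank J), ← pow_succ', ← pow_add]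
    congr 1
    omega
  have hsign : (-1 : ℚ) ^ n = -(-1) ^ rank J * (-1) ^ d := by
    rw [← zpow_natCast, ← zpow_natCast, show (n : ℤ) = rank J + d + 1 by omega,
      zpow_add₀ (by norm_num), zpow_add₀ (by norm_num)]
    ring
  rw [hsplit, sum_insert (by simp), hshift, hsign]
  linear_combination (-(-1 : ℚ) ^ rank J) * hEuler

theorem sum_X_pow_rank_comp_neg_X_sub_one_eq [Fintype α]
    [DecidableRel ((· < ·) : α → α → Prop)]
    (hrank : StrictMono rank) {bot : α} (hbot : ∀ I, bot ≤ I) (hrankbot : rank bot = 0)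
    (hbool : ∀ I : α, Nonempty ({J // J ≤ I} ≃o Finset (Fin (rank I))))
    {n : ℕ} (hdim : ∀ I, rank I ≤ n) (b : α → ℤ → ℕ)
    (hBuch : ∀ I, I ≠ bot → ∀ i : ℤ, i ≠ (n : ℤ) - rank I - 1 → b I i = 0)
    (hEuler : ∀ I, I ≠ bot →
      (∑ J ∈ univ.filter (I < ·), (-1 : ℚ) ^ (rank J - rank I - 1)) - 1
        = -(b I (-1) : ℚ) + ∑ i ∈ range (n + 1), (-1 : ℚ) ^ i * b I i)
    (hman : ∀ k : ℕ,
      ∑ I ∈ univ.filter (rank · = k + 1), (b I ((n : ℤ) - rank I - 1) : ℚ)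
        = #(univ.filter (rank · = k + 1))) :
    (∑ I : α, (X : ℚ[X]) ^ rank I).comp (-X - 1)
      = C (1 - ∑ i ∈ range n, (-1 : ℚ) ^ i * #(univ.filter (rank · = i + 1)))
        + C ((-1) ^ n) * (∑ I : α, X ^ rank I - 1) := by
  classical
  have hzero := filter_rank_eq_zero hrank hbot hrankbot
  rw [sum_X_pow_rank_comp_neg_X_sub_one hrank hbool]
  ext k
  rw [coeff_add, coeff_C, coeff_C_mul, coeff_sub, coeff_one,
    coeff_sum_C_mul_X_pow_rank, coeff_sum_X_pow_rank]
  rcases k with _ | k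
  · have hbot_le : univ.filter (bot ≤ ·) = univ := filter_true_of_mem fun I _ => hbot I
    simp [hzero, hbot_le, sum_neg_one_pow_rank hdim]
  · have hweight : ∀ J ∈ univ.filter (rank · = k + 1),
        ∑ I ∈ univ.filter (J ≤ ·), (-1 : ℚ) ^ rank I
          = (-1) ^ n * b J (n - rank J - 1) := by
      intro J hJ
      have hJbot : J ≠ bot := by rintro rfl; simp [hrankbot] at hJ
      exact sum_neg_one_pow_rank_ge hrank (hdim J) (b J) (hBuch J hJbot) (hEuler J hJbot)
    simp [sum_congr rfl hweight, ← mul_sum, hman]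

end SimplicialPoset

/-- The polynomial `(1 - X)^n p(X / (1 - X))`, i.e. `∑ h_i X^i` when `p` is an `f`-polynomial of
degree at most `n`. -/
noncomputable def hPolynomial {R : Type*} [CommRing R] (n : ℕ) (p : R[X]) : R[X] :=
  ∑ i ∈ range (n + 1), C (p.coeff i) * X ^ i * (1 - X) ^ (n - i)

theorem natDegree_hPolynomial_le {R : Type*} [CommRing R] (n : ℕ) (p : R[X]) :
    (hPolynomial n p).natDegree ≤ n := by
  refine natDegree_sum_le_of_forall_le _ _ fun i hi => ?_
  have hi : i ≤ n := Nat.lt_succ_iff.mp (mem_range.mp hi)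
  compute_degree
  omega

section HPolynomial

variable {K : Type*} [Field K] {n : ℕ} {p : K[X]}

theorem sum_mul_pow_mul_pow_sub (f : ℕ → K) (n : ℕ) (x : K) {y : K} (hy : y ≠ 0) :
    ∑ i ∈ range (n + 1), f i * x ^ i * y ^ (n - i)
      = y ^ n * ∑ i ∈ range (n + 1), f i * (x / y) ^ i := by
  rw [mul_sum]
  refine sum_congr rfl fun i hi => ?_
  rw [div_pow, ← Nat.sub_add_cancel (Nat.lt_succ_iff.mp (mem_range.mp hi)), pow_add,
    Nat.add_sub_cancel]
  field_simp

theorem eval_hPolynomial (hp : p.natDegree ≤ n) {a : K} (ha : a ≠ 1) :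
    (hPolynomial n p).eval a = (1 - a) ^ n * p.eval (a / (1 - a)) := by
  rw [eval_eq_sum_range' (Nat.lt_succ_of_le hp), hPolynomial, eval_finsetSum,
    ← sum_mul_pow_mul_pow_sub _ _ _ (sub_ne_zero.mpr ha.symm)]
  simp

theorem eval_reflect {N : ℕ} (hp : p.natDegree ≤ N) {a : K} (ha : a ≠ 0) :
    (reflect N p).eval a = a ^ N * p.eval a⁻¹ := by
  let := invertibleOfNonzero (inv_ne_zero ha)
  have h := eval₂_reflect_mul_pow (RingHom.id K) a⁻¹ N p hp
  rw [invOf_eq_inv, inv_inv] at h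
  rw [eval, eval, ← h, inv_pow]
  field_simp

theorem coeff_one_sub_X_pow (n i : ℕ) :
    ((1 - X : K[X]) ^ n).coeff i = (-1) ^ i * n.choose i := by
  rw [show (1 - X : K[X]) = C (-1) * (X + C (-1)) by simp; ring, mul_pow, ← C_pow, coeff_C_mul,
    coeff_X_add_C_pow]
  rcases le_or_gt i n with hi | hi
  · obtain ⟨k, rfl⟩ := Nat.exists_eq_add_of_le hi
    calc (-1 : K) ^ (i + k) * ((-1) ^ (i + k - i) * ((i + k).choose i))
        = (-1) ^ i * ((i + k).choose i) * (-1) ^ (k + k) := by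
          rw [Nat.add_sub_cancel_left]; ring
      _ = (-1) ^ i * ((i + k).choose i) := by rw [Even.neg_one_pow ⟨k, rfl⟩, mul_one]
  · simp [Nat.choose_eq_zero_of_lt hi]

theorem hPolynomial_eq_of_eq_comp_neg_X_sub_one [Infinite K] (hp : p.natDegree ≤ n) {c : K}
    (hfun : p = C c + C ((-1) ^ n) * p.comp (-X - 1)) :
    hPolynomial n p = C c * (1 - X) ^ n + reflect n (hPolynomial n p) := by
  refine eq_of_infinite_eval_eq _ _
    ((Set.toFinite {0, 1}).infinite_compl.mono fun a ha => ?_)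
  simp only [Set.mem_compl_iff, Set.mem_insert_iff, Set.mem_singleton_iff, not_or] at ha
  obtain ⟨ha0, ha1⟩ := ha
  have h1a : 1 - a ≠ 0 := sub_ne_zero.mpr (Ne.symm ha1)
  have hfun_a := congrArg (eval (a / (1 - a))) hfun
  have harg : -(a / (1 - a)) - 1 = a⁻¹ / (1 - a⁻¹) := by
    field_simp
    ring
  rw [Set.mem_ofPred_eq, eval_add, eval_mul, eval_C, eval_pow, eval_sub, eval_one, eval_X,
    eval_reflect (natDegree_hPolynomial_le n p) ha0, eval_hPolynomial hp ha1,
    eval_hPolynomial hp (by simpa using ha1), ← harg]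
  simp only [eval_add, eval_mul, eval_C, eval_comp, eval_sub, eval_neg, eval_X,
    eval_one] at hfun_a
  have hscale : a ^ n * (1 - a⁻¹) ^ n = (-1) ^ n * (1 - a) ^ n := by
    rw [← mul_pow, ← mul_pow]
    congr 1
    field_simp
    ring
  rw [hfun_a, ← mul_assoc, hscale]
  ring

theorem coeff_hPolynomial_of_eq_comp_neg_X_sub_one [Infinite K] (hp : p.natDegree ≤ n) {c : K}
    (hfun : p = C c + C ((-1) ^ n) * p.comp (-X - 1)) {i : ℕ} (hi : i ≤ n) :
    (hPolynomial n p).coeff i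
      = (hPolynomial n p).coeff (n - i) + (-1) ^ i * n.choose i * c := by
  conv_lhs => rw [hPolynomial_eq_of_eq_comp_neg_X_sub_one hp hfun]
  rw [coeff_add, coeff_C_mul, coeff_one_sub_X_pow, coeff_reflect, revAt_le hi]
  ring

end HPolynomial

theorem homology_manifold_dehn_sommerville_general {α : Type} [Fintype α] [PartialOrder α]
    [DecidableRel ((· < ·) : α → α → Prop)]
    (rank : α → ℕ) (bot : α) (hbot : ∀ I, bot ≤ I) (hrankbot : rank bot = 0)
    (hbool : ∀ I : α, Nonempty ({J : α // J ≤ I} ≃o Finset (Fin (rank I))))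
    (hmono : ∀ I J : α, I < J → rank I < rank J)
    (n : ℕ)
    (hdim : ∀ I, rank I ≤ n)
    (b : α → ℤ → ℕ)
    (hBuch : ∀ I, I ≠ bot → ∀ i : ℤ, i ≠ (n : ℤ) - (rank I : ℤ) - 1 → b I i = 0)
    (hEuler : ∀ I, I ≠ bot →
      (∑ J ∈ Finset.univ.filter (fun J : α => I < J), (-1 : ℚ) ^ (rank J - rank I - 1)) - 1
        = -(b I (-1) : ℚ) + ∑ i ∈ range (n + 1), (-1 : ℚ) ^ i * (b I (i : ℤ) : ℚ))
    (hman : ∀ k : ℕ,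
      (∑ I ∈ Finset.univ.filter (fun I : α => rank I = k + 1),
          (b I ((n : ℤ) - (rank I : ℤ) - 1) : ℚ))
        = ((Finset.univ.filter (fun I : α => rank I = k + 1)).card : ℚ))
    (chi : ℚ)
    (hchi : chi = ∑ i ∈ range n, (-1 : ℚ) ^ i *
        ((Finset.univ.filter (fun I : α => rank I = i + 1)).card : ℚ))
    (h : ℕ → ℚ)
    (hdef : ∑ i ∈ range (n + 1), C (h i) * X ^ i
      = ∑ i ∈ range (n + 1),
          C (((Finset.univ.filter (fun I : α => rank I = i)).card : ℚ)) * X ^ i * (1 - X) ^ (n - i)) :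
    ((∑ I : α, (X : Polynomial ℚ) ^ (rank I))
        = C (1 - (-1 : ℚ) ^ n - chi)
          + C ((-1 : ℚ) ^ n) * (∑ I : α, (X : Polynomial ℚ) ^ (rank I)).comp (-X - 1))
    ∧ ∀ i ≤ n, h i = h (n - i) + (-1 : ℚ) ^ i * (n.choose i : ℚ) * (1 - (-1 : ℚ) ^ n - chi) := by
  classical
  have hcomp :=
    sum_X_pow_rank_comp_neg_X_sub_one_eq hmono hbot hrankbot hbool hdim b hBuch hEuler hman
  rw [← hchi] at hcomp
  set F : ℚ[X] := ∑ I : α, X ^ rank I with hF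
  have hFdeg : F.natDegree ≤ n :=
    natDegree_sum_le_of_forall_le _ _ fun I _ => (natDegree_X_pow_le _).trans (hdim I)
  have hfun : F = C (1 - (-1) ^ n - chi) + C ((-1) ^ n) * F.comp (-X - 1) := by
    have := congrArg (·.comp (-X - 1)) hcomp
    simp only [comp_neg_X_sub_one_comp_neg_X_sub_one, add_comp, mul_comp, C_comp, sub_comp,
      one_comp] at this
    simp only [map_sub, map_one] at this ⊢
    linear_combination this
  refine ⟨hfun, fun i hi => ?_⟩
  have hhpoly : ∑ i ∈ range (n + 1), C (h i) * X ^ i = hPolynomial n F := by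
    simp only [hdef, hPolynomial, hF, coeff_sum_X_pow_rank]
  have hcoeff : ∀ k ≤ n, h k = (hPolynomial n F).coeff k := by
    intro k hk
    simp [← hhpoly, finsetSum_coeff, Nat.lt_succ_of_le hk]
  rw [hcoeff i hi, hcoeff (n - i) (Nat.sub_le n i)]
  exact coeff_hPolynomial_of_eq_comp_neg_X_sub_one hFdeg hfun hi

/-- Let `S` be a Buchsbaum simplicial poset of dimension `n-1` which is a homology manifold,
i.e. `f~_k(S) = f_k(S)` for all `k` (each link has top reduced homology of rank 1).  Then
the `f`-polynomial satisfies `f_S(t) = (1 - (-1)^n - χ(S)) + (-1)^n f_S(-t-1)`, and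
consequently the `h`-vector satisfies
`h_i = h_{n-i} + (-1)^i C(n,i) (1 - (-1)^n - χ(S))`. -/
theorem homology_manifold_dehn_sommerville {α : Type} [Fintype α] [PartialOrder α] [DecidableEq α]
    [DecidableRel ((· < ·) : α → α → Prop)]
    (rank : α → ℕ) (bot : α) (hbot : ∀ I, bot ≤ I) (hrankbot : rank bot = 0)
    (hbool : ∀ I : α, Nonempty ({J : α // J ≤ I} ≃o Finset (Fin (rank I))))
    (hmono : ∀ I J : α, I < J → rank I < rank J)
    (n : ℕ)
    (hdim : ∀ I, rank I ≤ n)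
    (hdimtop : ∃ I, rank I = n)
    (b : α → ℤ → ℕ)
    (hBuch : ∀ I, I ≠ bot → ∀ i : ℤ, i ≠ (n : ℤ) - (rank I : ℤ) - 1 → b I i = 0)
    (hEuler : ∀ I, I ≠ bot →
      (∑ J ∈ Finset.univ.filter (fun J : α => I < J), (-1 : ℚ) ^ (rank J - rank I - 1)) - 1
        = -(b I (-1) : ℚ) + ∑ i ∈ range (n + 1), (-1 : ℚ) ^ i * (b I (i : ℤ) : ℚ))
    (hman : ∀ k : ℕ,
      (∑ I ∈ Finset.univ.filter (fun I : α => rank I = k + 1),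
          (b I ((n : ℤ) - (rank I : ℤ) - 1) : ℚ))
        = ((Finset.univ.filter (fun I : α => rank I = k + 1)).card : ℚ))
    (chi : ℚ)
    (hchi : chi = ∑ i ∈ range n, (-1 : ℚ) ^ i *
        ((Finset.univ.filter (fun I : α => rank I = i + 1)).card : ℚ))
    (h : ℕ → ℚ)
    (hdef : ∑ i ∈ range (n + 1), C (h i) * X ^ i
      = ∑ i ∈ range (n + 1),
          C (((Finset.univ.filter (fun I : α => rank I = i)).card : ℚ)) * X ^ i * (1 - X) ^ (n - i)) :
    ((∑ I : α, (X : Polynomial ℚ) ^ (rank I))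
        = C (1 - (-1 : ℚ) ^ n - chi)
          + C ((-1 : ℚ) ^ n) * (∑ I : α, (X : Polynomial ℚ) ^ (rank I)).comp (-X - 1))
    ∧ ∀ i ≤ n, h i = h (n - i) + (-1 : ℚ) ^ i * (n.choose i : ℚ) * (1 - (-1 : ℚ) ^ n - chi) :=
  homology_manifold_dehn_sommerville_general rank bot hbot hrankbot hbool hmono n hdim b hBuch
    hEuler hman chi hchi h hdef
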